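/- Let A and B be countable types, let μ₁ be a subdistribution on A, μ₂ a subdistribution on B, let ε be a real number, let R ⊆ A × B, let f : A → (subdistributions on a countable type A') and g : B → (subdistributions on a countable type B'), let R' ⊆ A' × B', and let Err : A → [0,1]. If there is an (ε,R)-approximate coupling of μ₁ and μ₂, and for every (a,b) ∈ R there is an (Err a, R')-approximate coupling of f a and g b, then there is an (ε + ε', R')-approximate coupling of μ₁ ≫= f and μ₂ ≫= g, where ε' = E_{μ₁}[Err] = ∑' a, μ₁ a * Err a. -/
import Mathlib


/-- `μ` is a subdistribution on a countable type: nonnegative, summable, total mass ≤ 1. -/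
def IsSubDistr {A : Type*} [Countable A] (μ : A → ℝ) : Prop :=
  (∀ a, 0 ≤ μ a) ∧ Summable μ ∧ ∑' a, μ a ≤ 1

/-- Expectation of `X` with respect to `μ`. -/
noncomputable def expect {A : Type*} [Countable A] (μ X : A → ℝ) : ℝ :=
  ∑' a, μ a * X a

/-- Monadic bind of subdistributions. -/
noncomputable def sdBind {A B : Type*} [Countable A] [Countable B]
    (μ : A → ℝ) (f : A → B → ℝ) : B → ℝ :=
  fun b => ∑' a, μ a * f a b

/-- Dirac (return) subdistribution. -/
def sdRet {A : Type*} [DecidableEq A] (a : A) : A → ℝ :=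
  fun a' => if a' = a then 1 else 0

/-- The uniform subdistribution on `{0, …, N}`. -/
noncomputable def unifd (N : ℕ) : ℕ → ℝ :=
  fun n => if n ≤ N then 1 / (N + 1) else 0

/-- An `(ε, R)`-approximate coupling of `μ₁` and `μ₂` exists. -/
def ARCoupl {A B : Type*} [Countable A] [Countable B]
    (μ₁ : A → ℝ) (μ₂ : B → ℝ) (ε : ℝ) (R : Set (A × B)) : Prop :=
  ∀ X : A → ℝ, ∀ Y : B → ℝ,
    (∀ a, 0 ≤ X a ∧ X a ≤ 1) → (∀ b, 0 ≤ Y b ∧ Y b ≤ 1) →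
    (∀ a b, (a, b) ∈ R → X a ≤ Y b) →
    expect μ₁ X ≤ expect μ₂ Y + ε
section helpers
variable {A : Type*} [Countable A]

lemma summable_mul_of_bdd {μ X : A → ℝ} (hμ : IsSubDistr μ)
    (hX : ∀ a, 0 ≤ X a ∧ X a ≤ 1) : Summable (fun a => μ a * X a) :=
  Summable.of_nonneg_of_le (fun a => mul_nonneg (hμ.1 a) (hX a).1)
    (fun a => by nlinarith [(hX a).1, (hX a).2, hμ.1 a]) hμ.2.1

lemma expect_nonneg {μ X : A → ℝ} (hμ : ∀ a, 0 ≤ μ a) (hX : ∀ a, 0 ≤ X a) :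
    0 ≤ expect μ X :=
  tsum_nonneg fun a => mul_nonneg (hμ a) (hX a)

lemma expect_le_one {μ X : A → ℝ} (hμ : IsSubDistr μ)
    (hX : ∀ a, 0 ≤ X a ∧ X a ≤ 1) : expect μ X ≤ 1 := by
  refine le_trans (Summable.tsum_le_tsum (fun a => ?_) (summable_mul_of_bdd hμ hX) hμ.2.1) hμ.2.2
  nlinarith [(hX a).1, (hX a).2, hμ.1 a]

lemma expect_mono {μ X Y : A → ℝ} (hμ : ∀ a, 0 ≤ μ a) (hXY : ∀ a, X a ≤ Y a)
    (hX : Summable (fun a => μ a * X a)) (hY : Summable (fun a => μ a * Y a)) :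
    expect μ X ≤ expect μ Y :=
  Summable.tsum_le_tsum (fun a => mul_le_mul_of_nonneg_left (hXY a) (hμ a)) hX hY

lemma expect_bind {B : Type*} [Countable B] {μ : A → ℝ} {f : A → B → ℝ} {X : B → ℝ}
    (hμ : IsSubDistr μ) (hf : ∀ a, IsSubDistr (f a)) (hX : ∀ b, 0 ≤ X b ∧ X b ≤ 1) :
    expect (sdBind μ f) X = expect μ (fun a => expect (f a) X) := by
  have hsum : Summable (Function.uncurry (fun a b => μ a * (f a b * X b))) := by
    rw [summable_prod_of_nonneg]
    · constructor
      · intro a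
        exact ((summable_mul_of_bdd (hf a) hX).mul_left (μ a))
      · apply Summable.of_nonneg_of_le (fun a => tsum_nonneg fun b =>
          mul_nonneg (hμ.1 a) (mul_nonneg ((hf a).1 b) (hX b).1)) _ hμ.2.1
        intro a
        rw [tsum_mul_left]
        calc μ a * (∑' b, f a b * X b) ≤ μ a * 1 :=
              mul_le_mul_of_nonneg_left (expect_le_one (hf a) hX) (hμ.1 a)
          _ = μ a := mul_one _
    · intro p
      exact mul_nonneg (hμ.1 _) (mul_nonneg ((hf _).1 _) (hX _).1)
  calc expect (sdBind μ f) X = ∑' (b) (a), μ a * (f a b * X b) := by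
        unfold expect sdBind
        congr 1; ext b
        rw [← tsum_mul_right]
        congr 1; ext a; ring
    _ = ∑' (a) (b), μ a * (f a b * X b) := (Summable.tsum_comm' hsum
          (fun a => (summable_mul_of_bdd (hf a) hX).mul_left (μ a))
          (fun b => hsum.prod_symm.prod_factor b))
    _ = expect μ (fun a => expect (f a) X) := by
        unfold expect
        congr 1; ext a; rw [tsum_mul_left]
end helpers


theorem arcoupl_bind_left_err {A B A' B' : Type*}
    [Countable A] [Countable B] [Countable A'] [Countable B']
    (μ₁ : A → ℝ) (μ₂ : B → ℝ) (ε : ℝ) (R : Set (A × B))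
    (f : A → A' → ℝ) (g : B → B' → ℝ) (R' : Set (A' × B')) (Err : A → ℝ)
    (hμ₁ : IsSubDistr μ₁) (hμ₂ : IsSubDistr μ₂)
    (hf : ∀ a, IsSubDistr (f a)) (hg : ∀ b, IsSubDistr (g b))
    (hErr : ∀ a, 0 ≤ Err a ∧ Err a ≤ 1)
    (hR : ARCoupl μ₁ μ₂ ε R)
    (hfg : ∀ a b, (a, b) ∈ R → ARCoupl (f a) (g b) (Err a) R') :
    ARCoupl (sdBind μ₁ f) (sdBind μ₂ g) (ε + expect μ₁ Err) R' := by
  intro X Y hX hY hXY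
  set F : A → ℝ := fun a => max 0 (expect (f a) X - Err a) with hFdef
  set G : B → ℝ := fun b => expect (g b) Y with hGdef
  have hFb : ∀ a, 0 ≤ F a ∧ F a ≤ 1 := fun a =>
    ⟨le_max_left _ _, max_le zero_le_one (by
      have h1 := expect_le_one (hf a) hX
      have h2 := (hErr a).1
      linarith)⟩
  have hGb : ∀ b, 0 ≤ G b ∧ G b ≤ 1 := fun b =>
    ⟨expect_nonneg (hg b).1 (fun b' => (hY b').1), expect_le_one (hg b) hY⟩
  have hFG : ∀ a b, (a, b) ∈ R → F a ≤ G b := by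
    intro a b hab
    have h := hfg a b hab X Y hX hY hXY
    exact max_le (hGb b).1 (by simp only [hGdef]; linarith)
  have hmain : expect μ₁ F ≤ expect μ₂ G + ε := hR F G hFb hGb hFG
  have hEbind₁ : expect (sdBind μ₁ f) X = expect μ₁ (fun a => expect (f a) X) :=
    expect_bind hμ₁ hf hX
  have hEbind₂ : expect (sdBind μ₂ g) Y = expect μ₂ G := expect_bind hμ₂ hg hY
  have sF : Summable (fun a => μ₁ a * F a) := summable_mul_of_bdd hμ₁ hFb
  have sE : Summable (fun a => μ₁ a * Err a) := summable_mul_of_bdd hμ₁ hErr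
  have sL : Summable (fun a => μ₁ a * expect (f a) X) :=
    summable_mul_of_bdd hμ₁ (fun a =>
      ⟨expect_nonneg (hf a).1 (fun a' => (hX a').1), expect_le_one (hf a) hX⟩)
  have hsplit : expect μ₁ (fun a => expect (f a) X) ≤ expect μ₁ F + expect μ₁ Err := by
    have hle : ∀ a, μ₁ a * expect (f a) X ≤ μ₁ a * F a + μ₁ a * Err a := by
      intro a
      rw [← mul_add]
      refine mul_le_mul_of_nonneg_left ?_ (hμ₁.1 a)
      have := le_max_right 0 (expect (f a) X - Err a)
      simp only [hFdef]; linarith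
    have := Summable.tsum_le_tsum hle sL (sF.add sE)
    rw [Summable.tsum_add sF sE] at this
    exact this
  rw [hEbind₁, hEbind₂]
  unfold expect at *
  linarith
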